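/- arXiv:2206.00072 — 4 statements merged into one kernel-verified Lean document; each statement's English description precedes it below -/
import Mathlib

section
/- Let F be a finite field, let k_1, …, k_n be natural numbers with k_1 + ⋯ + k_n ≥ 1, and let A = (a_{i,j}) ∈ GL_n(F[x]) satisfy deg(a_{i,j}) ≤ k_j for all 1 ≤ i, j ≤ n. For each j, let v_j ∈ F^n be the vector whose i-th entry is the coefficient of x^{k_j} in a_{i,j}. Then the vectors v_1, v_2, …, v_n are linearly dependent over F. -/
/-!
Expanding `det A` by the Leibniz formula, every product `∏ a_{σ i, i}` has degree at most
`∑ k_j`, and its coefficient of `x ^ ∑ k_j` is `∏ v_{σ i, i}`. Hence `det (v_1 ⋯ v_n)` is the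
coefficient of `x ^ ∑ k_j` in `det A`, which vanishes because `det A` is a unit, i.e. a constant.
-/

open Polynomial Matrix

theorem Polynomial.coeff_prod_sum_of_natDegree_le {R ι : Type*} [CommSemiring R] (s : Finset ι)
    (f : ι → R[X]) (d : ι → ℕ) (h : ∀ i ∈ s, (f i).natDegree ≤ d i) :
    (∏ i ∈ s, f i).coeff (∑ i ∈ s, d i) = ∏ i ∈ s, (f i).coeff (d i) := by
  induction s using Finset.cons_induction with
  | empty => simp
  | cons a s ha ih =>
    have hs : ∀ i ∈ s, (f i).natDegree ≤ d i := fun i hi => h i (Finset.mem_cons_of_mem hi)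
    rw [Finset.prod_cons, Finset.sum_cons, Finset.prod_cons,
      coeff_mul_add_eq_of_natDegree_le (h a (Finset.mem_cons_self a s))
        ((natDegree_prod_le _ _).trans (Finset.sum_le_sum hs)), ih hs]

theorem Matrix.det_of_coeff_eq_coeff_det {R ι : Type*} [CommRing R] [Fintype ι] [DecidableEq ι]
    (M : Matrix ι ι R[X]) (k : ι → ℕ) (h : ∀ i j, (M i j).natDegree ≤ k j) :
    (of fun i j => (M i j).coeff (k j)).det = M.det.coeff (∑ j, k j) := by
  rw [det_apply', det_apply', finsetSum_coeff]
  refine Finset.sum_congr rfl fun σ _ => ?_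
  rw [← C_eq_intCast, coeff_C_mul,
    coeff_prod_sum_of_natDegree_le _ _ _ fun i _ => h (σ i) i]
  rfl

theorem stmt_5_general (F : Type*) [Field F]
    (n : ℕ) (k : Fin n → ℕ) (hk : 1 ≤ ∑ j, k j)
    (A : GL (Fin n) F[X])
    (hdeg : ∀ i j, ((A : Matrix (Fin n) (Fin n) F[X]) i j).degree ≤ (k j : ℕ)) :
    ¬ LinearIndependent F
        (fun j : Fin n => fun i : Fin n =>
          ((A : Matrix (Fin n) (Fin n) F[X]) i j).coeff (k j)) := by
  intro hli
  have hV : IsUnit (of fun i j => ((A : Matrix (Fin n) (Fin n) F[X]) i j).coeff (k j)).det :=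
    (isUnit_iff_isUnit_det _).mp (linearIndependent_cols_iff_isUnit.mp hli)
  have hdet_const : (A : Matrix (Fin n) (Fin n) F[X]).det.natDegree = 0 :=
    natDegree_eq_zero_of_isUnit (A.isUnit.map detMonoidHom)
  rw [det_of_coeff_eq_coeff_det _ k fun i j => natDegree_le_iff_degree_le.mpr (hdeg i j),
    coeff_eq_zero_of_natDegree_lt (by omega)] at hV
  exact not_isUnit_zero hV

/-- If `k₁ + ⋯ + kₙ ≥ 1` and `A ∈ GL_n(F[x])` has `deg a_{i,j} ≤ k_j` for all
`i, j`, then the vectors `v_j = (coeff of x^{k_j} in a_{i,j})_i ∈ Fⁿ` are linearly dependent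
over `F`. -/
theorem stmt_5 (F : Type*) [Field F] [Fintype F]
    (n : ℕ) (k : Fin n → ℕ) (hk : 1 ≤ ∑ j, k j)
    (A : GL (Fin n) F[X])
    (hdeg : ∀ i j, ((A : Matrix (Fin n) (Fin n) F[X]) i j).degree ≤ (k j : ℕ)) :
    ¬ LinearIndependent F
        (fun j : Fin n => fun i : Fin n =>
          ((A : Matrix (Fin n) (Fin n) F[X]) i j).coeff (k j)) :=
  stmt_5_general F n k hk A hdeg
end

section
/- Let F be a finite field with q elements, let n ≥ 2 and 2 ≤ i ≤ n, and let l_i ≥ l_{i+1} ≥ ⋯ ≥ l_n ≥ 1 be integers. Then there exist a finite set L of (n−i+1)-tuples of natural numbers, with every tuple (l̃_i, …, l̃_n) ∈ L satisfying l̃_i + l̃_{i+1} + ⋯ + l̃_n < l_i + l_{i+1} + ⋯ + l_n, and integer coefficients c_{l̃} for l̃ ∈ L (depending only on i and the tuples, not on l_1,…,l_{i-1}), such that for every choice of natural numbers l_1, …, l_{i-1}: #R^i_{n;l_1,…,l_{i-1},l_i,…,l_n} = Σ_{l̃ ∈ L} c_{l̃} · #P_{n;l_1,…,l_{i-1},l̃_i,…,l̃_n}.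 -/
open Polynomial Matrix

/-- `P_{n;l₁,…,lₙ}`: the set of `A ∈ GL_n(F[x])` with `deg a_{i,j} ≤ l_j` for all `i, j` and
constant-term matrix equal to the identity. -/
def Pset (F : Type*) [Field F] (n : ℕ) (l : Fin n → ℕ) : Set (GL (Fin n) F[X]) :=
  {A | (∀ i j, ((A : Matrix (Fin n) (Fin n) F[X]) i j).degree ≤ (l j : ℕ)) ∧
       (A : Matrix (Fin n) (Fin n) F[X]).map (fun p => p.coeff 0) = 1}

/-- `v_j(A) ∈ Fⁿ`: the vector of coefficients of `x^{l_j}` in the `j`-th column of `A`. -/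
def colVec (F : Type*) [Field F] (n : ℕ) (l : Fin n → ℕ) (A : GL (Fin n) F[X])
    (j : Fin n) : Fin n → F :=
  fun r => ((A : Matrix (Fin n) (Fin n) F[X]) r j).coeff (l j)

/-- `R^i_{n;l₁,…,lₙ}`: those `A ∈ P_{n;l₁,…,lₙ}` such that the vectors `v_i(A),…,vₙ(A)`
(columns with 1-based index `≥ i`) are linearly dependent over `F`. -/
def Rset (F : Type*) [Field F] (n : ℕ) (l : Fin n → ℕ) (i : ℕ) : Set (GL (Fin n) F[X]) :=
  {A ∈ Pset F n l |
    ¬ LinearIndependent F (fun j : {j : Fin n // i ≤ (j : ℕ) + 1} => colVec F n l A j)}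

/-!
Let `D_s(l) ⊆ P_l` consist of the matrices whose top coefficient vectors `v_k`, `k ∈ s`, are
linearly dependent, so that `R^i = D_{{i,…,n}}`. Choose `j₀ ∈ s` with `l_{j₀}` maximal and put
`s' = s \ {j₀}`. Then `A ∈ D_s(l) \ D_{s'}(l)` exactly when the `v_k`, `k ∈ s'`, are independent
and `v_{j₀} = ∑ λ_k v_k` for a unique `λ`. For fixed `λ`, subtracting
`∑ λ_k x^{l_{j₀} - l_k} · (column k)` from column `j₀` (a polynomial operation because
`l_k ≤ l_{j₀}`) and then multiplying on the left by the inverse of the constant term of this column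
operation keeps the constant term `1`, moves every `v_k` by one invertible matrix and kills
`v_{j₀}`. It is a bijection onto the matrices of `P_{l'}`, `l' = l - e_{j₀}`, whose `v_k`,
`k ∈ s'`, are independent. Hence
  `#D_s(l) = #D_{s'}(l) + q^{|s'|} (#P_{l'} - #D_{s'}(l'))`,
and induction on `s` writes `#D_s(l)` as an integer combination, with coefficients independent of
the degrees outside `s`, of counts `#P` at degree vectors lowered on `s` in total.
-/

namespace GLPolynomialCount

noncomputable section

section ConstantTerm

variable {R : Type*} [CommRing R] {ι : Type*} [Fintype ι] [DecidableEq ι]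

def constMatrix : GL ι R[X] →* GL ι R :=
  Units.map (constantCoeff : R[X] →+* R).mapMatrix.toMonoidHom

def constPart : GL ι R[X] →* GL ι R[X] :=
  (Units.map (C : R →+* R[X]).mapMatrix.toMonoidHom).comp constMatrix

lemma constMatrix_eq_one_iff {A : GL ι R[X]} :
    constMatrix A = 1 ↔ (A : Matrix ι ι R[X]).map (fun p => p.coeff 0) = 1 :=
  Units.ext_iff

lemma constMatrix_constPart (E : GL ι R[X]) :
    constMatrix (constPart E) = constMatrix E := by
  ext
  simp [constMatrix, constPart]

def mulNormalized (E A : GL ι R[X]) : GL ι R[X] := constPart E⁻¹ * (A * E)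

lemma mulNormalized_inv_mulNormalized (E A : GL ι R[X]) :
    mulNormalized E⁻¹ (mulNormalized E A) = A := by
  simp [mulNormalized, mul_assoc]

lemma constMatrix_mulNormalized {E A : GL ι R[X]} (hA : constMatrix A = 1) :
    constMatrix (mulNormalized E A) = 1 := by
  simp [mulNormalized, constMatrix_constPart, hA]

end ConstantTerm

section ColumnOperation

variable {R : Type*} [CommRing R] {ι : Type*} [DecidableEq ι] (j0 : ι)

def colMat (w : ι → R) : Matrix ι ι R :=
  Matrix.of fun r c => if c = j0 then w r else 0

lemma colMat_neg (w : ι → R) : colMat j0 (-w) = -colMat j0 w := by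
  ext r c
  by_cases h : c = j0 <;> simp [colMat, h]

variable [Fintype ι]

lemma mul_colMat_apply (w : ι → R) (M : Matrix ι ι R) (r c : ι) :
    (M * colMat j0 w) r c = if c = j0 then ∑ m, M r m * w m else 0 := by
  split_ifs with h <;> simp [Matrix.mul_apply, colMat, h]

lemma colMat_mul_colMat {w w' : ι → R} (hw' : w' j0 = 0) :
    colMat j0 w * colMat j0 w' = 0 := by
  ext r c
  rw [mul_colMat_apply]
  split_ifs with h <;> simp [colMat, hw']

def colOp (w : ι → R) (hw : w j0 = 0) : GL ι R where
  val := 1 + colMat j0 w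
  inv := 1 + colMat j0 (-w)
  val_inv := by
    simp only [colMat_neg, mul_add, add_mul, mul_neg, one_mul, mul_one,
      colMat_mul_colMat j0 hw]
    abel
  inv_val := by
    simp only [colMat_neg, mul_add, add_mul, neg_mul, one_mul, mul_one,
      colMat_mul_colMat j0 hw]
    abel

lemma colOp_inv (w : ι → R) (hw : w j0 = 0) :
    (colOp j0 w hw)⁻¹ = colOp j0 (-w) (by simp [hw]) :=
  Units.ext rfl

lemma mul_colOp_apply (w : ι → R) (hw : w j0 = 0) (M : Matrix ι ι R)
    (r c : ι) :
    (M * (colOp j0 w hw : Matrix ι ι R)) r c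
      = M r c + if c = j0 then ∑ m, M r m * w m else 0 := by
  simp only [colOp, Matrix.mul_add, Matrix.mul_one, Matrix.add_apply, mul_colMat_apply]

end ColumnOperation

section Degrees

variable {R : Type*} [CommRing R] {ι : Type*} [Fintype ι]

def ColDegreeLE (l : ι → ℕ) (M : Matrix ι ι R[X]) : Prop :=
  ∀ r c, (M r c).degree ≤ l c

lemma ColDegreeLE.map_C_mul {l : ι → ℕ} {M : Matrix ι ι R[X]} (hM : ColDegreeLE l M)
    (N : Matrix ι ι R) : ColDegreeLE l (N.map C * M) := by
  intro r c
  simp_rw [← mem_degreeLE, Matrix.mul_apply, Matrix.map_apply, C_mul']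
  exact Submodule.sum_mem _ fun m _ => Submodule.smul_mem _ _ (mem_degreeLE.mpr (hM m c))

lemma coeff_map_C_mul_apply (N : Matrix ι ι R) (M : Matrix ι ι R[X])
    (r c : ι) (k : ℕ) :
    ((N.map C * M) r c).coeff k = (N *ᵥ fun m => (M m c).coeff k) r := by
  simp [Matrix.mul_apply, Matrix.mulVec, dotProduct]

lemma degree_le_pred_iff {p : R[X]} {k : ℕ} (hk : 1 ≤ k) :
    p.degree ≤ ↑(k - 1) ↔ p.degree ≤ k ∧ p.coeff k = 0 := by
  simp only [degree_le_iff_coeff_zero, Nat.cast_lt]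
  refine ⟨fun h => ⟨fun m hm => h m (by omega), h k (by omega)⟩,
    fun ⟨h, hk0⟩ m hm => ?_⟩
  obtain rfl | hkm := eq_or_lt_of_le (show k ≤ m by omega)
  exacts [hk0, h m hkm]

end Degrees

section TopCoefficients

variable {F : Type*} [Field F] {n : ℕ} (l : Fin n → ℕ)

lemma colVec_constPart_mul (U A : GL (Fin n) F[X]) (j : Fin n) :
    colVec F n l (constPart U * A) j
      = (constMatrix U : Matrix (Fin n) (Fin n) F) *ᵥ colVec F n l A j := by
  funext r
  exact coeff_map_C_mul_apply _ _ r j (l j)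

lemma mulVec_constMatrix_injective (U : GL (Fin n) F[X]) :
    Function.Injective ((constMatrix U : Matrix (Fin n) (Fin n) F) *ᵥ ·) :=
  Matrix.mulVec_injective_iff_isUnit.mpr (Units.isUnit _)

lemma colVec_update_of_ne {j0 j : Fin n} (h : j ≠ j0) (v : ℕ) (A : GL (Fin n) F[X]) :
    colVec F n (Function.update l j0 v) A j = colVec F n l A j := by
  funext r
  simp only [colVec, Function.update_of_ne h]

lemma mem_Pset_update_pred_iff {j0 : Fin n} (h1 : 1 ≤ l j0) {A : GL (Fin n) F[X]} :
    A ∈ Pset F n (Function.update l j0 (l j0 - 1)) ↔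
      A ∈ Pset F n l ∧ colVec F n l A j0 = 0 := by
  simp only [Pset, Set.mem_ofPred_eq]
  constructor
  · rintro ⟨hdeg, h0⟩
    refine ⟨⟨fun r c => ?_, h0⟩, funext fun r => ?_⟩
    · by_cases hc : c = j0
      · subst hc
        exact ((degree_le_pred_iff h1).mp (by simpa using hdeg r c)).1
      · simpa [hc] using hdeg r c
    · exact ((degree_le_pred_iff h1).mp (by simpa using hdeg r j0)).2
  · rintro ⟨⟨hdeg, h0⟩, hv⟩
    refine ⟨fun r c => ?_, h0⟩
    by_cases hc : c = j0
    · subst hc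
      simpa using (degree_le_pred_iff h1).mpr ⟨hdeg r c, congrFun hv r⟩
    · simpa [hc] using hdeg r c

end TopCoefficients

section Shear

variable {F : Type*} [Field F] {n : ℕ} (l : Fin n → ℕ) (j0 : Fin n)

def shearColumn (c : Fin n → F) : Fin n → F[X] := fun m => C (c m) * X ^ (l j0 - l m)

lemma shearColumn_self {c : Fin n → F} (hc : c j0 = 0) : shearColumn l j0 c j0 = 0 := by
  simp [shearColumn, hc]

lemma shearColumn_neg (c : Fin n → F) : shearColumn l j0 (-c) = -shearColumn l j0 c := by
  funext m
  simp [shearColumn]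

def shearOp (c : Fin n → F) (hc : c j0 = 0) : GL (Fin n) F[X] :=
  colOp j0 (shearColumn l j0 c) (shearColumn_self l j0 hc)

def shear (c : Fin n → F) (hc : c j0 = 0) (A : GL (Fin n) F[X]) : GL (Fin n) F[X] :=
  mulNormalized (shearOp l j0 c hc) A

variable {l j0} {c : Fin n → F}

lemma ColDegreeLE.mul_shearOp (hcl : ∀ m, c m ≠ 0 → l m ≤ l j0) (hc : c j0 = 0)
    {M : Matrix (Fin n) (Fin n) F[X]} (hM : ColDegreeLE l M) :
    ColDegreeLE l (M * (shearOp l j0 c hc : Matrix (Fin n) (Fin n) F[X])) := by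
  intro r col
  rw [shearOp, mul_colOp_apply]
  refine (degree_add_le _ _).trans (max_le (hM r col) ?_)
  split_ifs with h
  · subst h
    refine (degree_sum_le _ _).trans (Finset.sup_le fun m _ => ?_)
    by_cases hm : c m = 0
    · simp [shearColumn, hm]
    calc (M r m * shearColumn l col c m).degree
        ≤ (M r m).degree + (shearColumn l col c m).degree := degree_mul_le _ _
      _ ≤ ↑(l m) + ↑(l col - l m) := add_le_add (hM r m) (degree_C_mul_X_pow_le _ _)
      _ = ↑(l col) := by rw [← Nat.cast_add, Nat.add_sub_cancel' (hcl m hm)]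
  · simp

lemma coeff_sum_mul_shearColumn (hcl : ∀ m, c m ≠ 0 → l m ≤ l j0)
    (M : Matrix (Fin n) (Fin n) F[X]) (r : Fin n) :
    (∑ m, M r m * shearColumn l j0 c m).coeff (l j0) = ∑ m, c m * (M r m).coeff (l m) := by
  rw [finsetSum_coeff]
  refine Finset.sum_congr rfl fun m _ => ?_
  by_cases hm : c m = 0
  · simp [shearColumn, hm]
  rw [shearColumn, mul_left_comm, coeff_C_mul, coeff_mul_X_pow', if_pos (Nat.sub_le _ _),
    Nat.sub_sub_self (hcl m hm)]

lemma shear_neg_shear (hc : c j0 = 0) (A : GL (Fin n) F[X]) :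
    shear l j0 (-c) (by simp [hc]) (shear l j0 c hc A) = A := by
  have h : shearOp l j0 (-c) (by simp [hc]) = (shearOp l j0 c hc)⁻¹ := by
    simp_rw [shearOp, colOp_inv, shearColumn_neg]
  rw [shear, shear, h, mulNormalized_inv_mulNormalized]

lemma shear_shear_neg (hc : c j0 = 0) (A : GL (Fin n) F[X]) :
    shear l j0 c hc (shear l j0 (-c) (by simp [hc]) A) = A := by
  simpa using shear_neg_shear (c := -c) (by simp [hc]) A

lemma shear_mem_Pset (hcl : ∀ m, c m ≠ 0 → l m ≤ l j0) (hc : c j0 = 0)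
    {A : GL (Fin n) F[X]} (hA : A ∈ Pset F n l) : shear l j0 c hc A ∈ Pset F n l :=
  ⟨(ColDegreeLE.mul_shearOp hcl hc hA.1).map_C_mul _,
    constMatrix_eq_one_iff.mp (constMatrix_mulNormalized (constMatrix_eq_one_iff.mpr hA.2))⟩

lemma colVec_shear (hcl : ∀ m, c m ≠ 0 → l m ≤ l j0) (hc : c j0 = 0) (A : GL (Fin n) F[X])
    (m : Fin n) :
    colVec F n l (shear l j0 c hc A) m
      = (constMatrix (shearOp l j0 c hc)⁻¹ : Matrix (Fin n) (Fin n) F) *ᵥ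
          (colVec F n l A m + if m = j0 then ∑ k, c k • colVec F n l A k else 0) := by
  rw [shear, mulNormalized, colVec_constPart_mul]
  congr 1
  funext r
  simp only [colVec, Units.val_mul, shearOp, mul_colOp_apply, coeff_add, Pi.add_apply]
  split_ifs with h
  · subst h
    simp [coeff_sum_mul_shearColumn hcl, Finset.sum_apply, colVec]
  · simp

lemma linearIndepOn_colVec_shear_iff (hcl : ∀ m, c m ≠ 0 → l m ≤ l j0) (hc : c j0 = 0)
    {s : Set (Fin n)} (hs : j0 ∉ s) (A : GL (Fin n) F[X]) :
    LinearIndepOn F (colVec F n l (shear l j0 c hc A)) s ↔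
      LinearIndepOn F (colVec F n l A) s := by
  set N := (constMatrix (shearOp l j0 c hc)⁻¹ : Matrix (Fin n) (Fin n) F)
  have h : Set.EqOn (colVec F n l (shear l j0 c hc A)) (N.mulVecLin ∘ colVec F n l A) s :=
    fun k hk => by simp [N, colVec_shear hcl, ne_of_mem_of_not_mem hk hs]
  rw [linearIndepOn_congr h]
  exact N.mulVecLin.linearIndepOn_iff_of_injOn (mulVec_constMatrix_injective _).injOn

lemma colVec_shear_self_eq_zero_iff (hcl : ∀ m, c m ≠ 0 → l m ≤ l j0) (hc : c j0 = 0)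
    (A : GL (Fin n) F[X]) :
    colVec F n l (shear l j0 c hc A) j0 = 0 ↔
      colVec F n l A j0 + ∑ k, c k • colVec F n l A k = 0 := by
  rw [colVec_shear hcl, if_pos rfl]
  exact (mulVec_constMatrix_injective _).eq_iff' (Matrix.mulVec_zero _)

lemma colVec_self_eq_sum_iff (hcl : ∀ m, c m ≠ 0 → l m ≤ l j0) (hc : c j0 = 0)
    (A : GL (Fin n) F[X]) :
    colVec F n l A j0 = ∑ k, c k • colVec F n l A k ↔
      colVec F n l (shear l j0 (-c) (by simp [hc]) A) j0 = 0 := by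
  rw [colVec_shear_self_eq_zero_iff (fun m hm => hcl m (by simpa using hm))]
  simp [neg_smul, add_neg_eq_zero]

lemma colVec_shear_self_eq_sum_iff (hcl : ∀ m, c m ≠ 0 → l m ≤ l j0) (hc : c j0 = 0)
    (B : GL (Fin n) F[X]) :
    colVec F n l (shear l j0 c hc B) j0 = ∑ k, c k • colVec F n l (shear l j0 c hc B) k ↔
      colVec F n l B j0 = 0 := by
  rw [colVec_self_eq_sum_iff hcl hc, shear_neg_shear]

end Shear

section ExtendByZero

variable {ι M : Type*} [DecidableEq ι] [Zero M]

def extendByZero (K : Finset ι) (lam : K → M) : ι → M :=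
  fun m => if h : m ∈ K then lam ⟨m, h⟩ else 0

lemma extendByZero_of_notMem {K : Finset ι} {m : ι} (hm : m ∉ K) (lam : K → M) :
    extendByZero K lam m = 0 :=
  dif_neg hm

lemma mem_of_extendByZero_ne_zero {K : Finset ι} {lam : K → M} {m : ι}
    (h : extendByZero K lam m ≠ 0) : m ∈ K :=
  by_contra fun hm => h (dif_neg hm)

lemma sum_extendByZero_smul {R V : Type*} [Fintype ι] [Semiring R] [AddCommMonoid V]
    [Module R V] (K : Finset ι) (lam : K → R) (v : ι → V) :
    ∑ m, extendByZero K lam m • v m = ∑ k : K, lam k • v k := by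
  rw [← Finset.sum_subset K.subset_univ fun m _ hm => by simp [extendByZero_of_notMem hm],
    ← Finset.sum_coe_sort K]
  simp [extendByZero]

end ExtendByZero

section Counting

variable {F : Type*} [Field F] {n : ℕ}

lemma finite_degreeLE [Finite F] (k : ℕ) : (degreeLE F k : Set F[X]).Finite := by
  rw [← degreeLT_succ_eq_degreeLE]
  have := Finite.of_equiv _ (degreeLTEquiv F (k + 1)).toEquiv.symm
  exact Set.toFinite _

lemma Pset_finite [Finite F] (l : Fin n → ℕ) : (Pset F n l).Finite := by
  have hpi : (Set.pi Set.univ fun _ : Fin n => Set.pi Set.univ fun c : Fin n =>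
      (degreeLE F (l c) : Set F[X])).Finite :=
    Set.Finite.pi fun _ => Set.Finite.pi fun c => finite_degreeLE (l c)
  have hinj : Function.Injective
      fun A : GL (Fin n) F[X] => ((A : Matrix (Fin n) (Fin n) F[X]) : Fin n → Fin n → F[X]) :=
    fun _ _ h => Units.ext h
  exact (hpi.preimage hinj.injOn).subset fun A hA r _ c _ => mem_degreeLE.mpr (hA.1 r c)

def Dset (F : Type*) [Field F] (n : ℕ) (l : Fin n → ℕ) (s : Set (Fin n)) :
    Set (GL (Fin n) F[X]) :=
  {A ∈ Pset F n l | ¬ LinearIndepOn F (colVec F n l A) s}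

lemma Rset_eq_Dset (l : Fin n → ℕ) (i : ℕ) :
    Rset F n l i = Dset F n l {j | i ≤ (j : ℕ) + 1} :=
  rfl

lemma Dset_subset_Pset (l : Fin n → ℕ) (s : Set (Fin n)) : Dset F n l s ⊆ Pset F n l :=
  fun _ hA => hA.1

variable {l : Fin n → ℕ} {j0 : Fin n}

lemma Pset_update_sdiff_Dset (h1 : 1 ≤ l j0) {s : Set (Fin n)} (hs : j0 ∉ s) :
    Pset F n (Function.update l j0 (l j0 - 1)) \ Dset F n (Function.update l j0 (l j0 - 1)) s
      = {B ∈ Pset F n l | colVec F n l B j0 = 0 ∧ LinearIndepOn F (colVec F n l B) s} := by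
  ext B
  have hcol : LinearIndepOn F (colVec F n (Function.update l j0 (l j0 - 1)) B) s ↔
      LinearIndepOn F (colVec F n l B) s :=
    linearIndepOn_congr fun k hk => colVec_update_of_ne l (ne_of_mem_of_not_mem hk hs) _ B
  simp only [Dset, Set.mem_sdiff, Set.mem_ofPred_eq, mem_Pset_update_pred_iff l h1, hcol]
  tauto

variable (l j0) in
def shearBy (K : Finset (Fin n)) (hj0 : j0 ∉ K) (p : (K → F) × GL (Fin n) F[X]) :
    GL (Fin n) F[X] :=
  shear l j0 (extendByZero K p.1) (extendByZero_of_notMem hj0 p.1) p.2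

lemma image_shearBy {K : Finset (Fin n)} (hj0 : j0 ∉ K) (hle : ∀ k ∈ K, l k ≤ l j0) :
    shearBy l j0 K hj0 '' (Set.univ ×ˢ
        {B ∈ Pset F n l | colVec F n l B j0 = 0 ∧ LinearIndepOn F (colVec F n l B) K})
      = {A ∈ Pset F n l | LinearIndepOn F (colVec F n l A) K ∧
          colVec F n l A j0 ∈ Submodule.span F (colVec F n l A '' K)} := by
  have hcl (lam : K → F) (m : Fin n) (hm : extendByZero K lam m ≠ 0) : l m ≤ l j0 :=
    hle m (mem_of_extendByZero_ne_zero hm)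
  ext A
  constructor
  · rintro ⟨⟨lam, B⟩, ⟨-, hBP, hB0, hBLI⟩, rfl⟩
    refine ⟨shear_mem_Pset (hcl lam) _ hBP,
      (linearIndepOn_colVec_shear_iff (hcl lam) _ hj0 B).mpr hBLI,
      (Submodule.mem_span_image_finset_iff_exists_fun F).mpr ⟨lam, ?_⟩⟩
    rw [← sum_extendByZero_smul]
    exact ((colVec_shear_self_eq_sum_iff (hcl lam) _ B).mpr hB0).symm
  · rintro ⟨hAP, hALI, hspan⟩
    obtain ⟨lam, hlam⟩ := (Submodule.mem_span_image_finset_iff_exists_fun F).mp hspan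
    have hc := extendByZero_of_notMem hj0 lam
    refine ⟨(lam, shear l j0 (-extendByZero K lam) (by simp [hc]) A), ⟨Set.mem_univ _,
      shear_mem_Pset (fun m hm => hcl lam m (by simpa using hm)) _ hAP, ?_, ?_⟩,
      shear_shear_neg hc A⟩
    · rw [← colVec_self_eq_sum_iff (hcl lam) hc, sum_extendByZero_smul]
      exact hlam.symm
    · rwa [linearIndepOn_colVec_shear_iff (fun m hm => hcl lam m (by simpa using hm)) _ hj0]

lemma injOn_shearBy {K : Finset (Fin n)} (hj0 : j0 ∉ K) (hle : ∀ k ∈ K, l k ≤ l j0) :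
    Set.InjOn (shearBy l j0 K hj0) (Set.univ ×ˢ
        {B ∈ Pset F n l | colVec F n l B j0 = 0 ∧ LinearIndepOn F (colVec F n l B) K}) := by
  have hcl (lam : K → F) (m : Fin n) (hm : extendByZero K lam m ≠ 0) : l m ≤ l j0 :=
    hle m (mem_of_extendByZero_ne_zero hm)
  rintro ⟨lam, B⟩ ⟨-, -, hB0, hBLI⟩ ⟨lam', B'⟩ ⟨-, -, hB0', -⟩ h
  have hc (lam : K → F) := extendByZero_of_notMem hj0 lam
  have hA := (linearIndepOn_colVec_shear_iff (hcl lam) (hc lam) hj0 B).mpr hBLI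
  have h1 := (colVec_shear_self_eq_sum_iff (hcl lam) (hc lam) B).mpr hB0
  have h2 := (colVec_shear_self_eq_sum_iff (hcl lam') (hc lam') B').mpr hB0'
  simp only [shearBy] at h
  rw [h] at h1 hA
  rw [sum_extendByZero_smul] at h1 h2
  obtain rfl : lam = lam' :=
    funext (Fintype.linearIndependent_iffₛ.mp hA lam lam' (h1.symm.trans h2))
  have := congrArg (shear l j0 (-extendByZero K lam) (by simp [hc])) h
  rw [shear_neg_shear, shear_neg_shear] at this
  rw [this]

lemma ncard_linearIndepOn_mem_span {K : Finset (Fin n)} (hj0 : j0 ∉ K)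
    (hle : ∀ k ∈ K, l k ≤ l j0) :
    {A ∈ Pset F n l | LinearIndepOn F (colVec F n l A) K ∧
        colVec F n l A j0 ∈ Submodule.span F (colVec F n l A '' K)}.ncard
      = Nat.card F ^ K.card * {B ∈ Pset F n l | colVec F n l B j0 = 0 ∧
          LinearIndepOn F (colVec F n l B) K}.ncard := by
  rw [← image_shearBy hj0 hle, (injOn_shearBy hj0 hle).ncard_image, Set.ncard_prod,
    Set.ncard_univ, Nat.card_fun]
  simp

lemma ncard_Dset_insert [Finite F] (K : Finset (Fin n)) (hj0 : j0 ∉ K)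
    (hle : ∀ k ∈ K, l k ≤ l j0) (h1 : 1 ≤ l j0) :
    ((Dset F n l ↑(insert j0 K)).ncard : ℤ)
      = (Dset F n l K).ncard + (Nat.card F : ℤ) ^ K.card *
          ((Pset F n (Function.update l j0 (l j0 - 1))).ncard
            - (Dset F n (Function.update l j0 (l j0 - 1)) K).ncard) := by
  have hsplit : Dset F n l ↑(insert j0 K) = Dset F n l K ∪
      {A ∈ Pset F n l | LinearIndepOn F (colVec F n l A) K ∧
        colVec F n l A j0 ∈ Submodule.span F (colVec F n l A '' K)} := by
    ext A
    simp only [Dset, Finset.coe_insert, linearIndepOn_insert (Finset.mem_coe.not.mpr hj0),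
      Set.mem_union, Set.mem_ofPred_eq]
    tauto
  have hdisj : Disjoint (Dset F n l K) {A ∈ Pset F n l | LinearIndepOn F (colVec F n l A) K ∧
      colVec F n l A j0 ∈ Submodule.span F (colVec F n l A '' K)} :=
    Set.disjoint_left.mpr fun A hD hS => hD.2 hS.2.1
  rw [hsplit, Set.ncard_union_eq hdisj ((Pset_finite l).subset (Dset_subset_Pset l _))
      ((Pset_finite l).subset fun _ hA => hA.1), ncard_linearIndepOn_mem_span hj0 hle,
    ← Pset_update_sdiff_Dset h1 (Finset.mem_coe.not.mpr hj0)]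
  push_cast [Set.cast_ncard_sdiff (Dset_subset_Pset _ _) (Pset_finite _)]
  rfl

end Counting

section TailInduction

lemma sum_update_pred_lt {ι : Type*} [Fintype ι] [DecidableEq ι] (t : ι → ℕ) {j : ι}
    (h : 1 ≤ t j) : ∑ k, Function.update t j (t j - 1) k < ∑ k, t k := by
  refine Finset.sum_lt_sum (fun k _ => ?_) ⟨j, Finset.mem_univ _, ?_⟩
  · by_cases hk : k = j
    · subst hk
      simp
    · simp [Function.update_of_ne hk]
  · rw [Function.update_self]
    omega

variable {F : Type*} [Field F] {n : ℕ} {p : Fin n → Prop} [DecidablePred p]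

variable (p) in
def withTail (head : Fin n → ℕ) (t : {j // p j} → ℕ) : Fin n → ℕ :=
  fun j => if h : p j then t ⟨j, h⟩ else head j

lemma withTail_of_pos (head : Fin n → ℕ) (t : {j // p j} → ℕ) {j : Fin n} (h : p j) :
    withTail p head t j = t ⟨j, h⟩ :=
  dif_pos h

lemma withTail_update (head : Fin n → ℕ) (t : {j // p j} → ℕ) (j : {j // p j}) (v : ℕ) :
    withTail p head (Function.update t j v) = Function.update (withTail p head t) j v := by
  funext k
  by_cases hk : p k
  · rw [withTail_of_pos _ _ hk]
    by_cases hkj : k = j.1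
    · subst hkj
      simp
    · rw [Function.update_of_ne (fun h => hkj (congrArg Subtype.val h)),
        Function.update_of_ne hkj, withTail_of_pos _ _ hk]
  · have hkj : k ≠ j.1 := fun h => hk (h ▸ j.2)
    simp [withTail, hk, Function.update_of_ne hkj]

variable (F p)

def pCount (s : {j // p j} → ℕ) (head : Fin n → ℕ) : ℤ :=
  (Pset F n (withTail p head s)).ncard

/-- Integer combinations, with coefficients independent of the head, of the counts
`#P_{n; head, s}` over tails `s` of total degree less than that of `t`. -/
def spanBelow (t : {j // p j} → ℕ) : Submodule ℤ ((Fin n → ℕ) → ℤ) :=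
  Submodule.span ℤ (pCount F p '' {s | ∑ j, s j < ∑ j, t j})

variable {F p}

lemma spanBelow_mono {t t' : {j // p j} → ℕ} (h : ∑ j, t' j < ∑ j, t j) :
    spanBelow F p t' ≤ spanBelow F p t :=
  Submodule.span_mono (Set.image_mono fun _ hs => lt_trans hs h)

lemma exists_sum_of_mem_spanBelow {t : {j // p j} → ℕ} {f : (Fin n → ℕ) → ℤ}
    (hf : f ∈ spanBelow F p t) :
    ∃ (L : Finset ({j // p j} → ℕ)) (c : ({j // p j} → ℕ) → ℤ),
      (∀ s ∈ L, ∑ j, s j < ∑ j, t j) ∧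
        ∀ head, f head = ∑ s ∈ L, c s * pCount F p s head := by
  obtain ⟨w, hw, rfl⟩ := (Finsupp.mem_span_image_iff_linearCombination ℤ).mp hf
  refine ⟨w.support, w, fun s hs => hw hs, fun head => ?_⟩
  simp [Finsupp.linearCombination_apply, Finsupp.sum, Finset.sum_apply]

lemma ncard_Dset_withTail_eq [Finite F] {K : Finset (Fin n)} (hK : ∀ k ∈ K, p k)
    (t : {j // p j} → ℕ) {j0 : {j // p j}} (hj0 : j0.1 ∈ K)
    (hmax : ∀ k : {j // p j}, k.1 ∈ K → t k ≤ t j0) (h1 : 1 ≤ t j0) :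
    (fun head => ((Dset F n (withTail p head t) K).ncard : ℤ))
      = (fun head => ((Dset F n (withTail p head t) ↑(K.erase j0.1)).ncard : ℤ))
        + (Nat.card F : ℤ) ^ (K.erase j0.1).card •
          (pCount F p (Function.update t j0 (t j0 - 1))
            - fun head => ((Dset F n (withTail p head (Function.update t j0 (t j0 - 1)))
                ↑(K.erase j0.1)).ncard : ℤ)) := by
  funext head
  have hj0t : withTail p head t j0 = t j0 := withTail_of_pos _ _ _
  have h := ncard_Dset_insert (F := F) (l := withTail p head t) (K.erase j0.1)
    (Finset.notMem_erase _ K)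
    (fun k hk => by
      rw [withTail_of_pos _ _ (hK k (Finset.mem_of_mem_erase hk)), hj0t]
      exact hmax _ (Finset.mem_of_mem_erase hk))
    (hj0t ▸ h1)
  rw [Finset.insert_erase hj0, hj0t, ← withTail_update] at h
  simp [h, pCount]

lemma ncard_Dset_mem_spanBelow [Finite F] (K : Finset (Fin n)) (hK : ∀ k ∈ K, p k)
    (t : {j // p j} → ℕ) (ht : ∀ j : {j // p j}, j.1 ∈ K → 1 ≤ t j) :
    (fun head => ((Dset F n (withTail p head t) K).ncard : ℤ)) ∈ spanBelow F p t := by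
  induction K using Finset.strongInduction generalizing t with
  | H K ih =>
  rcases K.eq_empty_or_nonempty with rfl | ⟨k, hk⟩
  · convert (spanBelow F p t).zero_mem
    simp [Dset]
  obtain ⟨j0, hj0, hmax⟩ :=
    (K.subtype p).exists_max_image t ⟨⟨k, hK k hk⟩, Finset.mem_subtype.mpr hk⟩
  rw [Finset.mem_subtype] at hj0
  have hlt := sum_update_pred_lt t (ht j0 hj0)
  have hK' : ∀ k ∈ K.erase j0.1, p k := fun k hk => hK k (Finset.mem_of_mem_erase hk)
  have ht' : ∀ j : {j // p j}, j.1 ∈ K.erase j0.1 → 1 ≤ t j :=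
    fun j hj => ht j (Finset.mem_of_mem_erase hj)
  rw [ncard_Dset_withTail_eq hK t hj0 (fun k hk => hmax k (Finset.mem_subtype.mpr hk))
    (ht j0 hj0)]
  refine add_mem (ih _ (Finset.erase_ssubset hj0) hK' t ht')
    (Submodule.smul_mem _ _ (sub_mem (Submodule.subset_span ⟨_, hlt, rfl⟩)
      (spanBelow_mono hlt (ih _ (Finset.erase_ssubset hj0) hK' _ fun j hj => ?_))))
  rw [Function.update_of_ne fun h => Finset.ne_of_mem_erase hj (congrArg Subtype.val h)]
  exact ht' j hj

end TailInduction

end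

end GLPolynomialCount

open GLPolynomialCount

theorem stmt_9_general (F : Type*) [Field F] [Fintype F]
    (n i : ℕ)
    (ltail : {j : Fin n // i ≤ (j : ℕ) + 1} → ℕ)
    (hpos : ∀ j, 1 ≤ ltail j) :
    ∃ (L : Finset ({j : Fin n // i ≤ (j : ℕ) + 1} → ℕ))
      (c : ({j : Fin n // i ≤ (j : ℕ) + 1} → ℕ) → ℤ),
      (∀ t ∈ L, (∑ j, t j) < ∑ j, ltail j) ∧
      ∀ head : Fin n → ℕ,
        ((Rset F n (fun j => if h : i ≤ (j : ℕ) + 1 then ltail ⟨j, h⟩ else head j) i).ncard : ℤ)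
          = ∑ t ∈ L, c t *
              ((Pset F n (fun j => if h : i ≤ (j : ℕ) + 1 then t ⟨j, h⟩ else head j)).ncard : ℤ) := by
  set K := Finset.univ.filter fun j : Fin n => i ≤ (j : ℕ) + 1
  have hK : {j : Fin n | i ≤ (j : ℕ) + 1} = ↑K := by simp [K]
  obtain ⟨L, c, hL, hc⟩ := exists_sum_of_mem_spanBelow
    (ncard_Dset_mem_spanBelow (F := F) K (by simp [K]) ltail fun j _ => hpos j)
  refine ⟨L, c, hL, fun head => ?_⟩
  rw [Rset_eq_Dset, hK]
  exact hc head

/-- For `2 ≤ i ≤ n` and `l_i ≥ ⋯ ≥ lₙ ≥ 1`, there are a finite set `L` of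
`(n-i+1)`-tuples, each of total sum smaller than `l_i + ⋯ + lₙ`, and integer coefficients
`c_t` (independent of `l₁,…,l_{i-1}`) with
`#R^i_{n;l₁,…,lₙ} = Σ_{t ∈ L} c_t · #P_{n;l₁,…,l_{i-1},t_i,…,tₙ}` for every choice of
`l₁,…,l_{i-1}`. -/
theorem stmt_9 (F : Type*) [Field F] [Fintype F] (q : ℕ) (hq : Fintype.card F = q)
    (n i : ℕ) (hn : 2 ≤ n) (hi2 : 2 ≤ i) (hin : i ≤ n)
    (ltail : {j : Fin n // i ≤ (j : ℕ) + 1} → ℕ)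
    (hdesc : ∀ j j' : {j : Fin n // i ≤ (j : ℕ) + 1}, j.1 ≤ j'.1 → ltail j' ≤ ltail j)
    (hpos : ∀ j, 1 ≤ ltail j) :
    ∃ (L : Finset ({j : Fin n // i ≤ (j : ℕ) + 1} → ℕ))
      (c : ({j : Fin n // i ≤ (j : ℕ) + 1} → ℕ) → ℤ),
      (∀ t ∈ L, (∑ j, t j) < ∑ j, ltail j) ∧
      ∀ head : Fin n → ℕ,
        ((Rset F n (fun j => if h : i ≤ (j : ℕ) + 1 then ltail ⟨j, h⟩ else head j) i).ncard : ℤ)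
          = ∑ t ∈ L, c t *
              ((Pset F n (fun j => if h : i ≤ (j : ℕ) + 1 then t ⟨j, h⟩ else head j)).ncard : ℤ) :=
  stmt_9_general F n i ltail hpos
end

section
/- Let F be a finite field with q elements, let n ≥ 2 and 1 ≤ i ≤ n−1, and let l_1, …, l_n be natural numbers with l_i ≥ l_{i+1} ≥ ⋯ ≥ l_n ≥ 1. Then #Q^i_{n;l_1,…,l_n} = q^{n−i} · ( #P_{n;l_1,…,l_{i-1},l_i−1,l_{i+1},…,l_n} − #R^{i+1}_{n;l_1,…,l_{i-1},l_i−1,l_{i+1},…,l_n} ). -/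
open Polynomial Matrix

/-- `Q^i_{n;l₁,…,lₙ}`: those `A ∈ P_{n;l₁,…,lₙ}` such that `v_i(A),…,vₙ(A)` are linearly
dependent while `v_{i+1}(A),…,vₙ(A)` are linearly independent over `F`. -/
def Qset (F : Type*) [Field F] (n : ℕ) (l : Fin n → ℕ) (i : ℕ) : Set (GL (Fin n) F[X]) :=
  {A ∈ Pset F n l |
    ¬ LinearIndependent F (fun j : {j : Fin n // i ≤ (j : ℕ) + 1} => colVec F n l A j) ∧
    LinearIndependent F (fun j : {j : Fin n // i + 1 ≤ (j : ℕ) + 1} => colVec F n l A j)}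


section Aux
variable {F : Type*} [Field F] {n : ℕ}

noncomputable def eMat (i0 : Fin n) (l : Fin n → ℕ) (c : Fin n → F) :
    Matrix (Fin n) (Fin n) F[X] :=
  Matrix.of fun r s =>
    if s = i0 ∧ i0 < r then Polynomial.C (c r) * Polynomial.X ^ (l i0 - l r) else 0

lemma eMat_mul_eMat (i0 : Fin n) (l : Fin n → ℕ) (c c' : Fin n → F) :
    eMat i0 l c * eMat i0 l c' = 0 := by
  refine Matrix.ext fun r s => ?_
  rw [Matrix.mul_apply, Matrix.zero_apply]
  apply Finset.sum_eq_zero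
  intro k _
  by_cases hk : k = i0
  · subst hk
    simp [eMat, lt_irrefl]
  · simp [eMat, hk]

lemma eMat_add (i0 : Fin n) (l : Fin n → ℕ) (c c' : Fin n → F) :
    eMat i0 l c + eMat i0 l c' = eMat i0 l (c + c') := by
  ext r s
  by_cases h : s = i0 ∧ i0 < r <;> simp [eMat, h, add_mul]

noncomputable def Umat (i0 : Fin n) (l : Fin n → ℕ) (c : Fin n → F) :
    Matrix (Fin n) (Fin n) F[X] := 1 + eMat i0 l c

lemma Umat_mul (i0 : Fin n) (l : Fin n → ℕ) (c c' : Fin n → F) :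
    Umat i0 l c * Umat i0 l c' = Umat i0 l (c + c') := by
  simp [Umat, add_mul, mul_add, eMat_mul_eMat, ← eMat_add]
  abel

lemma eMat_zero (i0 : Fin n) (l : Fin n → ℕ) : eMat i0 l (0 : Fin n → F) = 0 := by
  ext r s; by_cases h : s = i0 ∧ i0 < r <;> simp [eMat, h]

lemma Umat_zero (i0 : Fin n) (l : Fin n → ℕ) : Umat i0 l (0 : Fin n → F) = 1 := by
  simp [Umat, eMat_zero]

noncomputable def Uunit (i0 : Fin n) (l : Fin n → ℕ) (c : Fin n → F) : GL (Fin n) F[X] :=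
  ⟨Umat i0 l c, Umat i0 l (-c),
   by rw [Umat_mul]; simpa using Umat_zero i0 l,
   by rw [Umat_mul]; simpa using Umat_zero i0 l⟩

lemma Uunit_mul (i0 : Fin n) (l : Fin n → ℕ) (c c' : Fin n → F) :
    Uunit i0 l c * Uunit i0 l c' = Uunit i0 l (c + c') := by
  apply Units.ext
  exact Umat_mul i0 l c c'

lemma Uunit_zero (i0 : Fin n) (l : Fin n → ℕ) :
    Uunit i0 l (0 : Fin n → F) = 1 := by
  apply Units.ext
  exact Umat_zero i0 l

/-- the "constant coefficient, viewed back in `F[X]`" ring hom on matrices -/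
noncomputable def ev0 (F : Type*) [Field F] (n : ℕ) :
    Matrix (Fin n) (Fin n) F[X] →+* Matrix (Fin n) (Fin n) F[X] :=
  ((Polynomial.C).mapMatrix).comp ((Polynomial.constantCoeff (R := F)).mapMatrix)

noncomputable def evGL (F : Type*) [Field F] (n : ℕ) :
    GL (Fin n) F[X] →* GL (Fin n) F[X] := Units.map (ev0 F n).toMonoidHom

noncomputable def psi (i0 : Fin n) (l : Fin n → ℕ) (c : Fin n → F) (W : GL (Fin n) F[X]) :
    GL (Fin n) F[X] :=
  (evGL F n (Uunit i0 l c))⁻¹ * W * Uunit i0 l c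

lemma psi_psi (i0 : Fin n) (l : Fin n → ℕ) (c c' : Fin n → F) (W : GL (Fin n) F[X]) :
    psi i0 l c' (psi i0 l c W) = psi i0 l (c + c') W := by
  unfold psi
  rw [← Uunit_mul, _root_.map_mul, _root_.mul_inv_rev]
  group

lemma psi_zero (i0 : Fin n) (l : Fin n → ℕ) (W : GL (Fin n) F[X]) :
    psi i0 l (0 : Fin n → F) W = W := by
  unfold psi
  rw [Uunit_zero]
  simp

lemma psi_neg_psi (i0 : Fin n) (l : Fin n → ℕ) (c : Fin n → F) (W : GL (Fin n) F[X]) :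
    psi i0 l (-c) (psi i0 l c W) = W := by
  rw [psi_psi]; simpa using psi_zero i0 l W

end Aux


section LinAlg
variable {F : Type*} [Field F] {n : ℕ}

lemma sum_subtype_eq' (p : Fin n → Prop) [DecidablePred p] {M : Type*} [AddCommMonoid M]
    (f : Fin n → M) (h : ∀ j, ¬ p j → f j = 0) :
    ∑ j : {j : Fin n // p j}, f j = ∑ j, f j := by
  rw [← Finset.sum_subtype (Finset.filter p Finset.univ)
      (fun j => by simp [Finset.mem_filter]) f]
  rw [Finset.sum_filter_of_ne (fun x _ hx => by by_contra hp; exact hx (h x hp))]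

/-- existence of the coefficient vector -/
lemma exists_c (v : Fin n → (Fin n → F)) (i0 : Fin n)
    (hdep : ¬ LinearIndependent F (fun j : {j : Fin n // i0 ≤ j} => v j))
    (hind : LinearIndependent F (fun j : {j : Fin n // i0 < j} => v j)) :
    ∃ c : Fin n → F, (∀ j, ¬ i0 < j → c j = 0) ∧ v i0 = ∑ j, c j • v j := by
  rw [Fintype.not_linearIndependent_iff] at hdep
  obtain ⟨g, hsum, j0, hj0⟩ := hdep
  set G : Fin n → F := fun j => if h : i0 ≤ j then g ⟨j, h⟩ else 0 with hG
  have hGsupp : ∀ j, ¬ i0 ≤ j → G j = 0 := by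
    intro j hj; simp [hG, hj]
  have hGsum : ∑ j, G j • v j = 0 := by
    rw [← sum_subtype_eq' (fun j => i0 ≤ j) (fun j => G j • v j)
        (fun j hj => by show G j • v j = 0; rw [hGsupp j hj, zero_smul])]
    rw [← hsum]
    apply Finset.sum_congr rfl
    intro j _
    simp [hG, j.2]
  have hGi0 : G i0 ≠ 0 := by
    intro h0
    have hsupp2 : ∀ j, ¬ i0 < j → G j • v j = 0 := by
      intro j hj
      rcases eq_or_ne j i0 with rfl | hne
      · rw [h0, zero_smul]
      · rw [hGsupp j (fun hle => hj (lt_of_le_of_ne hle (Ne.symm hne))), zero_smul]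
    have h2 : ∑ j : {j : Fin n // i0 < j}, G (j : Fin n) • v j = 0 := by
      rw [sum_subtype_eq' (fun j => i0 < j) (fun j => G j • v j)
        (fun j hj => hsupp2 j hj), hGsum]
    have hall := Fintype.linearIndependent_iff.mp hind (fun j => G j) h2
    apply hj0
    have : G j0 = 0 := by
      rcases lt_or_ge i0 (j0 : Fin n) with h | h
      · exact hall ⟨j0, h⟩
      · rcases eq_or_ne (j0 : Fin n) i0 with he | hne
        · rw [← he] at h0
          exact h0
        · exact hGsupp j0 (fun hle => hne (le_antisymm h hle))
    simpa [hG, j0.2] using this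
  refine ⟨fun j => if i0 < j then -(G j) / (G i0) else 0, fun j hj => by simp [hj], ?_⟩
  rw [← Finset.add_sum_erase Finset.univ (fun j => G j • v j) (Finset.mem_univ i0)] at hGsum
  have key : ∑ j ∈ Finset.univ.erase i0, G j • v j = -(G i0 • v i0) := by
    linear_combination (norm := module) hGsum
  have : ∑ j, (if i0 < j then -(G j) / (G i0) else 0) • v j
      = ∑ j ∈ Finset.univ.erase i0, (-(G i0))⁻¹ • (G j • v j) := by
    rw [← Finset.add_sum_erase Finset.univ
      (fun j => (if i0 < j then -(G j) / (G i0) else 0) • v j) (Finset.mem_univ i0)]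
    rw [if_neg (lt_irrefl i0), zero_smul, zero_add]
    apply Finset.sum_congr rfl
    intro j hj
    have hjne : j ≠ i0 := Finset.ne_of_mem_erase hj
    by_cases h : i0 < j
    · rw [if_pos h, smul_smul]
      congr 1
      rw [div_eq_mul_inv, inv_neg]
      ring
    · rw [if_neg h, hGsupp j (fun hle => h (lt_of_le_of_ne hle (Ne.symm hjne))), zero_smul,
        smul_zero]
  rw [this, ← Finset.smul_sum, key]
  rw [smul_neg, inv_neg, neg_smul, neg_neg, smul_smul, inv_mul_cancel₀ hGi0, one_smul]

lemma unique_c (v : Fin n → (Fin n → F)) (i0 : Fin n)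
    (hind : LinearIndependent F (fun j : {j : Fin n // i0 < j} => v j))
    (c c' : Fin n → F) (hc : ∀ j, ¬ i0 < j → c j = 0) (hc' : ∀ j, ¬ i0 < j → c' j = 0)
    (h : ∑ j, c j • v j = ∑ j, c' j • v j) : c = c' := by
  have hz : ∑ j : {j : Fin n // i0 < j}, (c j - c' j) • v j = 0 := by
    rw [sum_subtype_eq' (fun j => i0 < j) (fun j => (c j - c' j) • v j)
      (fun j hj => by show (c j - c' j) • v j = 0; rw [hc j hj, hc' j hj, sub_self, zero_smul])]
    simp only [sub_smul, Finset.sum_sub_distrib, h, sub_self]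
  have hall := Fintype.linearIndependent_iff.mp hind (fun j => c j - c' j) hz
  funext j
  by_cases hj : i0 < j
  · have := hall ⟨j, hj⟩
    rw [← sub_eq_zero]
    exact this
  · rw [hc j hj, hc' j hj]

/-- linear independence transfer under multiplication by an invertible matrix -/
lemma li_mulVec {ι : Type*} (M Minv : Matrix (Fin n) (Fin n) F) (h : Minv * M = 1)
    (v : ι → (Fin n → F)) :
    LinearIndependent F (fun j => M.mulVec (v j)) ↔ LinearIndependent F v := by
  have hker : LinearMap.ker (Matrix.mulVecLin M) = ⊥ := by
    rw [LinearMap.ker_eq_bot]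
    intro x y hxy
    have := congrArg (Minv.mulVec) hxy
    simpa [Matrix.mulVec_mulVec, h, Matrix.one_mulVec] using this
  exact LinearMap.linearIndependent_iff (Matrix.mulVecLin M) hker

end LinAlg

section Comp
variable {F : Type*} [Field F] {n : ℕ}

lemma degree_le_sub_one {p : F[X]} {m : ℕ} (h : p.degree ≤ (m : ℕ))
    (h0 : p.coeff m = 0) : p.degree ≤ ((m - 1 : ℕ) : WithBot ℕ) := by
  rw [degree_le_iff_coeff_zero] at h ⊢
  intro k hk
  have hk' : m - 1 < k := by exact_mod_cast hk
  rcases eq_or_lt_of_le (Nat.le_of_pred_lt hk') with rfl | hlt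
  · exact h0
  · exact h k (by exact_mod_cast hlt)

lemma mulU_apply (i0 : Fin n) (l : Fin n → ℕ) (c : Fin n → F)
    (W : Matrix (Fin n) (Fin n) F[X]) (r s : Fin n) :
    (W * Umat i0 l c) r s = W r s +
      if s = i0 then
        ∑ k ∈ Finset.Ioi i0, W r k * (Polynomial.C (c k) * Polynomial.X ^ (l i0 - l k))
      else 0 := by
  rw [Umat, mul_add, mul_one, Matrix.add_apply]
  congr 1
  rw [Matrix.mul_apply]
  by_cases hs : s = i0
  · rw [if_pos hs]
    rw [← Finset.sum_filter_of_ne (p := fun k => i0 < k)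
      (f := fun k => W r k * eMat i0 l c k s) ?_]
    · have : Finset.filter (fun k => i0 < k) Finset.univ = Finset.Ioi i0 := by
        ext k; simp
      rw [this]
      apply Finset.sum_congr rfl
      intro k hk
      rw [Finset.mem_Ioi] at hk
      simp [eMat, hs, hk]
    · intro k _ hne
      by_contra hlt
      exact hne (by simp [eMat, hs, hlt])
  · rw [if_neg hs]
    apply Finset.sum_eq_zero
    intro k _
    simp [eMat, hs]

lemma degree_mulU (i0 : Fin n) (l : Fin n → ℕ) (c : Fin n → F)
    (hld : ∀ k, i0 < k → l k ≤ l i0)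
    (W : Matrix (Fin n) (Fin n) F[X]) (hW : ∀ r k, (W r k).degree ≤ (l k : ℕ))
    (r s : Fin n) : ((W * Umat i0 l c) r s).degree ≤ (l s : ℕ) := by
  rw [mulU_apply]
  apply le_trans (Polynomial.degree_add_le _ _)
  rw [max_le_iff]
  refine ⟨hW r s, ?_⟩
  by_cases hs : s = i0
  · rw [if_pos hs, hs]
    apply le_trans (Polynomial.degree_sum_le _ _)
    apply Finset.sup_le
    intro k hk
    rw [Finset.mem_Ioi] at hk
    apply le_trans (Polynomial.degree_mul_le _ _)
    have h1 : (Polynomial.C (c k) * Polynomial.X ^ (l i0 - l k) : F[X]).degree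
        ≤ ((l i0 - l k : ℕ) : WithBot ℕ) := by
      apply le_trans (Polynomial.degree_mul_le _ _)
      apply le_trans (add_le_add Polynomial.degree_C_le (le_of_eq (Polynomial.degree_X_pow _)))
      simp
    apply le_trans (add_le_add (hW r k) h1)
    rw [← Nat.cast_add]
    exact_mod_cast Nat.le_of_eq (by have := hld k hk; omega)
  · rw [if_neg hs]
    simp [Polynomial.degree_zero]

end Comp


section Comp2
variable {F : Type*} [Field F] {n : ℕ}

lemma mulU_apply_ne (i0 : Fin n) (l : Fin n → ℕ) (c : Fin n → F)
    (W : Matrix (Fin n) (Fin n) F[X]) (r j : Fin n) (hj : j ≠ i0) :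
    (W * Umat i0 l c) r j = W r j := by
  rw [mulU_apply, if_neg hj, add_zero]

lemma coeff_mulU_top (i0 : Fin n) (l : Fin n → ℕ) (c : Fin n → F)
    (hld : ∀ k, i0 < k → l k ≤ l i0)
    (A : Matrix (Fin n) (Fin n) F[X]) (r : Fin n) :
    ((A * Umat i0 l c) r i0).coeff (l i0)
      = (A r i0).coeff (l i0) + ∑ k ∈ Finset.Ioi i0, c k * (A r k).coeff (l k) := by
  rw [mulU_apply, if_pos rfl, Polynomial.coeff_add, Polynomial.finset_sum_coeff]
  congr 1
  apply Finset.sum_congr rfl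
  intro k hk
  rw [Finset.mem_Ioi] at hk
  rw [show A r k * (Polynomial.C (c k) * Polynomial.X ^ (l i0 - l k))
      = (A r k * Polynomial.C (c k)) * Polynomial.X ^ (l i0 - l k) by ring]
  rw [Polynomial.coeff_mul_X_pow', if_pos (Nat.sub_le _ _), Polynomial.coeff_mul_C]
  have h2 : l i0 - (l i0 - l k) = l k := by have := hld k hk; omega
  rw [h2, mul_comm]

lemma Cmul_apply (M : Matrix (Fin n) (Fin n) F) (Z : Matrix (Fin n) (Fin n) F[X]) (r s : Fin n) :
    ((M.map (fun a => Polynomial.C a)) * Z) r s = ∑ k, Polynomial.C (M r k) * Z k s := by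
  rw [Matrix.mul_apply]
  apply Finset.sum_congr rfl
  intro k _
  rw [Matrix.map_apply]

lemma degree_Cmul (M : Matrix (Fin n) (Fin n) F) (Z : Matrix (Fin n) (Fin n) F[X])
    (r s : Fin n) (b : WithBot ℕ) (h : ∀ k, (Z k s).degree ≤ b) :
    (((M.map (fun a => Polynomial.C a)) * Z) r s).degree ≤ b := by
  rw [Cmul_apply]
  apply le_trans (Polynomial.degree_sum_le _ _)
  apply Finset.sup_le
  intro k _
  apply le_trans (Polynomial.degree_mul_le _ _)
  apply le_trans (add_le_add Polynomial.degree_C_le (h k))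
  rw [zero_add]

lemma coeff_Cmul (M : Matrix (Fin n) (Fin n) F) (Z : Matrix (Fin n) (Fin n) F[X])
    (r s : Fin n) (t : ℕ) :
    (((M.map (fun a => Polynomial.C a)) * Z) r s).coeff t
      = M.mulVec (fun k => (Z k s).coeff t) r := by
  rw [Cmul_apply, Polynomial.finset_sum_coeff]
  rw [Matrix.mulVec]
  simp [dotProduct, Polynomial.coeff_C_mul]

noncomputable def M0 (i0 : Fin n) (l : Fin n → ℕ) (c : Fin n → F) :
    Matrix (Fin n) (Fin n) F := (Umat i0 l c).map (fun p => p.coeff 0)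

lemma map_coeff0_mul (X Y : Matrix (Fin n) (Fin n) F[X]) :
    (X * Y).map (fun p : F[X] => p.coeff 0)
      = X.map (fun p : F[X] => p.coeff 0) * Y.map (fun p : F[X] => p.coeff 0) := by
  have h : (fun p : F[X] => p.coeff 0) = ⇑(Polynomial.constantCoeff (R := F)) := rfl
  rw [h, ← RingHom.mapMatrix_apply, ← RingHom.mapMatrix_apply, ← RingHom.mapMatrix_apply,
    _root_.map_mul]

lemma M0_mul (i0 : Fin n) (l : Fin n → ℕ) (c c' : Fin n → F) :
    M0 i0 l c * M0 i0 l c' = M0 i0 l (c + c') := by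
  rw [M0, M0, M0, ← map_coeff0_mul, Umat_mul]

lemma M0_zero (i0 : Fin n) (l : Fin n → ℕ) : M0 i0 l (0 : Fin n → F) = 1 := by
  rw [M0, Umat_zero]
  exact Matrix.map_one _ (by simp) (by simp)

lemma M0_inv (i0 : Fin n) (l : Fin n → ℕ) (c : Fin n → F) :
    M0 i0 l c * M0 i0 l (-c) = 1 := by
  rw [M0_mul]
  simpa using M0_zero i0 l

lemma psi_coe (i0 : Fin n) (l : Fin n → ℕ) (c : Fin n → F) (W : GL (Fin n) F[X]) :
    (psi i0 l c W : Matrix (Fin n) (Fin n) F[X])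
      = (M0 i0 l (-c)).map (fun a => Polynomial.C a)
          * ((W : Matrix (Fin n) (Fin n) F[X]) * Umat i0 l c) := by
  have h1 : (evGL F n (Uunit i0 l c))⁻¹ = evGL F n (Uunit i0 l (-c)) := by
    rw [← map_inv]
    congr 1
    apply Units.ext
    rfl
  unfold psi
  rw [h1, Units.val_mul, Units.val_mul, mul_assoc]
  congr 1

lemma ev0_ev0 (M : Matrix (Fin n) (Fin n) F[X]) : ev0 F n (ev0 F n M) = ev0 F n M := by
  ext r s
  simp [ev0, RingHom.mapMatrix_apply, Matrix.map_apply]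

lemma evGL_evGL (x : GL (Fin n) F[X]) : evGL F n (evGL F n x) = evGL F n x := by
  apply Units.ext
  show ev0 F n (ev0 F n (x : Matrix (Fin n) (Fin n) F[X])) = ev0 F n (x : Matrix (Fin n) (Fin n) F[X])
  exact ev0_ev0 _

lemma evGL_psi (i0 : Fin n) (l : Fin n → ℕ) (c : Fin n → F) (W : GL (Fin n) F[X])
    (h : evGL F n W = 1) : evGL F n (psi i0 l c W) = 1 := by
  unfold psi
  rw [_root_.map_mul, _root_.map_mul, map_inv, evGL_evGL, h]
  group

lemma mapC_eq_one_iff (K : Matrix (Fin n) (Fin n) F) :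
    K.map (fun a => Polynomial.C a) = 1 ↔ K = 1 := by
  constructor
  · intro h
    rw [← Matrix.ext_iff] at h ⊢
    intro r s
    have h2 := h r s
    rw [Matrix.map_apply, Matrix.one_apply] at h2
    rw [Matrix.one_apply]
    by_cases hrs : r = s
    · rw [if_pos hrs] at h2 ⊢
      exact Polynomial.C_injective (by simpa using h2)
    · rw [if_neg hrs] at h2 ⊢
      exact Polynomial.C_injective (by simpa using h2)
  · intro h
    rw [h]
    exact Matrix.map_one _ (by simp) (by simp)

lemma evGL_eq_one_iff (W : GL (Fin n) F[X]) :
    evGL F n W = 1 ↔ (W : Matrix (Fin n) (Fin n) F[X]).map (fun p => p.coeff 0) = 1 := by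
  rw [Units.ext_iff, Units.val_one]
  show ev0 F n (W : Matrix (Fin n) (Fin n) F[X]) = 1 ↔ _
  have h : ev0 F n (W : Matrix (Fin n) (Fin n) F[X])
      = ((W : Matrix (Fin n) (Fin n) F[X]).map (fun p => p.coeff 0)).map
          (fun a => Polynomial.C a) := by
    ext r s
    simp [ev0, RingHom.mapMatrix_apply, Matrix.map_apply, constantCoeff_apply]
  rw [h, mapC_eq_one_iff]

end Comp2


section Main
variable {F : Type*} [Field F] {n : ℕ}

lemma update_le (i0 : Fin n) (l : Fin n → ℕ) (k : Fin n) :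
    Function.update l i0 (l i0 - 1) k ≤ l k := by
  rcases eq_or_ne k i0 with rfl | h
  · rw [Function.update_self]; omega
  · rw [Function.update_of_ne h]

lemma forward_mem (i0 : Fin n) (l : Fin n → ℕ)
    (hld : ∀ k, i0 < k → l k ≤ l i0) (hl1 : 1 ≤ l i0)
    (c : Fin n → F) (hc : ∀ j, ¬ i0 < j → c j = 0)
    (W : GL (Fin n) F[X]) (hW : W ∈ Pset F n (Function.update l i0 (l i0 - 1))) :
    psi i0 l c W ∈ Pset F n l ∧
    (∀ j : Fin n, j ≠ i0 →
       colVec F n l (psi i0 l c W) j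
         = (M0 i0 l (-c)).mulVec (colVec F n (Function.update l i0 (l i0 - 1)) W j)) ∧
    colVec F n l (psi i0 l c W) i0 = ∑ k, c k • colVec F n l (psi i0 l c W) k := by
  obtain ⟨hdeg, hconst⟩ := hW
  set l' := Function.update l i0 (l i0 - 1) with hl'
  have hdeg' : ∀ r k, ((W : Matrix (Fin n) (Fin n) F[X]) r k).degree ≤ (l k : ℕ) := by
    intro r k
    refine le_trans (hdeg r k) ?_
    exact_mod_cast update_le i0 l k
  have hPmem : psi i0 l c W ∈ Pset F n l := by
    constructor
    · intro r s
      rw [psi_coe]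
      apply degree_Cmul
      intro k
      exact degree_mulU i0 l c hld _ hdeg' k s
    · exact (evGL_eq_one_iff _).mp (evGL_psi i0 l c W ((evGL_eq_one_iff _).mpr hconst))
  have hb : ∀ j : Fin n, j ≠ i0 →
      colVec F n l (psi i0 l c W) j = (M0 i0 l (-c)).mulVec (colVec F n l' W j) := by
    intro j hj
    funext r
    show ((psi i0 l c W : Matrix (Fin n) (Fin n) F[X]) r j).coeff (l j) = _
    rw [psi_coe, coeff_Cmul]
    have h3 : (fun k => (((W : Matrix (Fin n) (Fin n) F[X]) * Umat i0 l c) k j).coeff (l j))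
        = colVec F n l' W j := by
      funext k
      rw [mulU_apply_ne i0 l c _ k j hj]
      show _ = ((W : Matrix (Fin n) (Fin n) F[X]) k j).coeff (l' j)
      rw [hl', Function.update_of_ne hj]
    rw [h3]
  refine ⟨hPmem, hb, ?_⟩
  have h1 : colVec F n l (psi i0 l c W) i0
      = (M0 i0 l (-c)).mulVec (fun k => ∑ k' ∈ Finset.Ioi i0, c k' * colVec F n l' W k' k) := by
    funext r
    show ((psi i0 l c W : Matrix (Fin n) (Fin n) F[X]) r i0).coeff (l i0) = _
    rw [psi_coe, coeff_Cmul]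
    have h3 : (fun k => (((W : Matrix (Fin n) (Fin n) F[X]) * Umat i0 l c) k i0).coeff (l i0))
        = fun k => ∑ k' ∈ Finset.Ioi i0, c k' * colVec F n l' W k' k := by
      funext k
      rw [coeff_mulU_top i0 l c hld _ k]
      have hz : ((W : Matrix (Fin n) (Fin n) F[X]) k i0).coeff (l i0) = 0 := by
        apply Polynomial.coeff_eq_zero_of_degree_lt
        refine lt_of_le_of_lt (hdeg k i0) ?_
        rw [hl', Function.update_self]
        exact_mod_cast Nat.sub_lt (by omega) one_pos
      rw [hz, zero_add]
      apply Finset.sum_congr rfl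
      intro k' hk'
      rw [Finset.mem_Ioi] at hk'
      show _ = c k' * ((W : Matrix (Fin n) (Fin n) F[X]) k k').coeff (l' k')
      rw [hl', Function.update_of_ne (ne_of_gt hk')]
    rw [h3]
  rw [h1]
  have h2 : (fun k => ∑ k' ∈ Finset.Ioi i0, c k' * colVec F n l' W k' k)
      = ∑ k' ∈ Finset.Ioi i0, c k' • colVec F n l' W k' := by
    funext k
    rw [Finset.sum_apply]
    apply Finset.sum_congr rfl
    intro k' _
    simp
  rw [h2, ← Matrix.mulVecLin_apply, map_sum]
  have h4 : ∀ k' ∈ Finset.Ioi i0,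
      (Matrix.mulVecLin (M0 i0 l (-c))) (c k' • colVec F n l' W k')
        = c k' • colVec F n l (psi i0 l c W) k' := by
    intro k' hk'
    rw [Finset.mem_Ioi] at hk'
    rw [_root_.map_smul, Matrix.mulVecLin_apply, ← hb k' (ne_of_gt hk')]
  rw [Finset.sum_congr rfl h4]
  apply Finset.sum_subset (Finset.subset_univ _)
  intro k _ hk
  rw [hc k (by simpa using hk), zero_smul]

lemma backward_mem (i0 : Fin n) (l : Fin n → ℕ)
    (hld : ∀ k, i0 < k → l k ≤ l i0) (hl1 : 1 ≤ l i0)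
    (c : Fin n → F) (hc : ∀ j, ¬ i0 < j → c j = 0)
    (A : GL (Fin n) F[X]) (hA : A ∈ Pset F n l)
    (hrel : colVec F n l A i0 = ∑ k, c k • colVec F n l A k) :
    psi i0 l (-c) A ∈ Pset F n (Function.update l i0 (l i0 - 1)) ∧
    ∀ j : Fin n, j ≠ i0 →
      colVec F n (Function.update l i0 (l i0 - 1)) (psi i0 l (-c) A) j
        = (M0 i0 l c).mulVec (colVec F n l A j) := by
  obtain ⟨hdeg, hconst⟩ := hA
  set l' := Function.update l i0 (l i0 - 1) with hl'
  have hcoe : (psi i0 l (-c) A : Matrix (Fin n) (Fin n) F[X])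
      = (M0 i0 l c).map (fun a => Polynomial.C a)
          * ((A : Matrix (Fin n) (Fin n) F[X]) * Umat i0 l (-c)) := by
    rw [psi_coe, neg_neg]
  have hkey : ∀ k, (((A : Matrix (Fin n) (Fin n) F[X]) * Umat i0 l (-c)) k i0).coeff (l i0)
      = 0 := by
    intro k
    rw [coeff_mulU_top i0 l (-c) hld _ k]
    have hr := congrFun hrel k
    have hr2 : ((A : Matrix (Fin n) (Fin n) F[X]) k i0).coeff (l i0)
        = ∑ k' ∈ Finset.Ioi i0, c k' * ((A : Matrix (Fin n) (Fin n) F[X]) k k').coeff (l k') := by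
      have h5 : (∑ k' : Fin n, c k' • colVec F n l A k') k
          = ∑ k' : Fin n, c k' * ((A : Matrix (Fin n) (Fin n) F[X]) k k').coeff (l k') := by
        rw [Finset.sum_apply]
        rfl
      rw [show ((A : Matrix (Fin n) (Fin n) F[X]) k i0).coeff (l i0)
          = colVec F n l A i0 k from rfl, hr, h5]
      symm
      apply Finset.sum_subset (Finset.subset_univ _)
      intro x _ hx
      rw [hc x (by simpa using hx), zero_mul]
    rw [hr2]
    simp only [Pi.neg_apply, neg_mul, Finset.sum_neg_distrib]
    exact add_neg_cancel _
  have hPmem : psi i0 l (-c) A ∈ Pset F n l' := by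
    constructor
    · intro r s
      rw [hcoe]
      apply degree_Cmul
      intro k
      rcases eq_or_ne s i0 with hs | hs
      · rw [hs, hl', Function.update_self]
        exact degree_le_sub_one (degree_mulU i0 l (-c) hld _ (fun r k => hdeg r k) k i0) (hkey k)
      · rw [mulU_apply_ne i0 l (-c) _ k s hs, hl', Function.update_of_ne hs]
        exact hdeg k s
    · exact (evGL_eq_one_iff _).mp (evGL_psi i0 l (-c) A ((evGL_eq_one_iff _).mpr hconst))
  refine ⟨hPmem, ?_⟩
  intro j hj
  funext r
  show ((psi i0 l (-c) A : Matrix (Fin n) (Fin n) F[X]) r j).coeff (l' j) = _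
  rw [hcoe, coeff_Cmul]
  have h3 : (fun k => (((A : Matrix (Fin n) (Fin n) F[X]) * Umat i0 l (-c)) k j).coeff (l' j))
      = colVec F n l A j := by
    funext k
    rw [mulU_apply_ne i0 l (-c) _ k j hj, hl', Function.update_of_ne hj]
    rfl
  rw [h3]

end Main


section Count
variable {F : Type*} [Field F] {n : ℕ}

lemma li_subtype_iff (v : Fin n → (Fin n → F)) (p q : Fin n → Prop) (hpq : ∀ j, p j ↔ q j) :
    LinearIndependent F (fun j : {j : Fin n // p j} => v j)
      ↔ LinearIndependent F (fun j : {j : Fin n // q j} => v j) := by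
  rw [← linearIndependent_equiv (Equiv.subtypeEquivRight hpq)
      (f := fun j : {j : Fin n // q j} => v j)]
  have hcomp : ((fun j : {j : Fin n // q j} => v (j : Fin n))
      ∘ ⇑(Equiv.subtypeEquivRight hpq)) = fun j : {j : Fin n // p j} => v (j : Fin n) := by
    funext j
    rfl
  rw [hcomp]

lemma not_li_of_rel (v : Fin n → (Fin n → F)) (i0 : Fin n) (c : Fin n → F)
    (hc : ∀ j, ¬ i0 < j → c j = 0) (hrel : v i0 = ∑ k, c k • v k) :
    ¬ LinearIndependent F (fun j : {j : Fin n // i0 ≤ j} => v j) := by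
  rw [Fintype.not_linearIndependent_iff]
  refine ⟨fun j => if (j : Fin n) = i0 then 1 else -(c j), ?_, ⟨⟨i0, le_refl i0⟩, by simp⟩⟩
  have h0 : ∀ j : Fin n, ¬ i0 ≤ j → (if j = i0 then (1:F) else -(c j)) • v j = 0 := by
    intro j hj
    rw [if_neg (fun h => hj (le_of_eq h.symm)),
      hc j (fun h => hj (le_of_lt h)), neg_zero, zero_smul]
  rw [sum_subtype_eq' (fun j => i0 ≤ j)
    (fun j => (if j = i0 then (1:F) else -(c j)) • v j) h0]
  rw [← Finset.add_sum_erase Finset.univ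
    (fun j => (if j = i0 then (1:F) else -(c j)) • v j) (Finset.mem_univ i0)]
  rw [if_pos rfl, one_smul]
  have h1 : ∑ j ∈ Finset.univ.erase i0, (if j = i0 then (1:F) else -(c j)) • v j
      = -∑ j ∈ Finset.univ.erase i0, c j • v j := by
    rw [← Finset.sum_neg_distrib]
    apply Finset.sum_congr rfl
    intro j hj
    rw [if_neg (Finset.ne_of_mem_erase hj), neg_smul]
  rw [h1]
  have h2 : v i0 = ∑ j ∈ Finset.univ.erase i0, c j • v j := by
    rw [hrel, ← Finset.add_sum_erase Finset.univ (fun j => c j • v j) (Finset.mem_univ i0),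
      hc i0 (lt_irrefl i0), zero_smul, zero_add]
  rw [← h2, add_neg_cancel]

variable [Fintype F]

lemma Pset_finite (l : Fin n → ℕ) : (Pset F n l).Finite := by
  classical
  set L := Finset.univ.sup l with hL
  have hle : ∀ j, l j ≤ L := fun j => Finset.le_sup (Finset.mem_univ j)
  set f : GL (Fin n) F[X] → (Fin n → Fin n → (Fin (L+1) → F)) :=
    fun A r s k => ((A : Matrix (Fin n) (Fin n) F[X]) r s).coeff k with hf
  apply Set.Finite.of_finite_image (f := f) (Set.toFinite _)
  intro A hA B hB hAB
  apply Units.ext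
  refine Matrix.ext fun r s => Polynomial.ext fun m => ?_
  rcases le_or_gt m L with hm | hm
  · have h2 := congrFun (congrFun (congrFun hAB r) s) ⟨m, by omega⟩
    simpa [hf] using h2
  · have hdA : (((A : GL (Fin n) F[X]) : Matrix (Fin n) (Fin n) F[X]) r s).degree < (m : ℕ) :=
      lt_of_le_of_lt (hA.1 r s) (by exact_mod_cast (by have := hle s; omega : l s < m))
    have hdB : (((B : GL (Fin n) F[X]) : Matrix (Fin n) (Fin n) F[X]) r s).degree < (m : ℕ) :=
      lt_of_le_of_lt (hB.1 r s) (by exact_mod_cast (by have := hle s; omega : l s < m))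
    rw [Polynomial.coeff_eq_zero_of_degree_lt hdA, Polynomial.coeff_eq_zero_of_degree_lt hdB]

lemma card_V (i0 : Fin n) (q : ℕ) (hq : Fintype.card F = q) :
    Nat.card {c : Fin n → F // ∀ j, ¬ i0 < j → c j = 0} = q ^ (n - 1 - (i0 : ℕ)) := by
  classical
  have e : {c : Fin n → F // ∀ j, ¬ i0 < j → c j = 0} ≃ ({j : Fin n // i0 < j} → F) :=
    { toFun := fun c j => c.1 j
      invFun := fun f => ⟨fun j => if h : i0 < j then f ⟨j, h⟩ else 0, fun j hj => dif_neg hj⟩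
      left_inv := by
        intro c
        apply Subtype.ext
        funext j
        by_cases h : i0 < j
        · simp [h]
        · simp [h, c.2 j h]
      right_inv := by
        intro f
        funext j
        simp [j.2] }
  rw [Nat.card_congr e, Nat.card_eq_fintype_card, Fintype.card_fun, hq]
  congr 1
  rw [Fintype.card_subtype]
  have h3 : Finset.filter (fun j => i0 < j) Finset.univ = Finset.Ioi i0 := by
    ext k; simp
  rw [h3, Fin.card_Ioi]

end Count

/-- For `1 ≤ i ≤ n - 1` and `l_i ≥ l_{i+1} ≥ ⋯ ≥ lₙ ≥ 1`,
`#Q^i_{n;l₁,…,lₙ} = q^{n-i} · (#P_{n;…,l_i - 1,…} − #R^{i+1}_{n;…,l_i - 1,…})`. -/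
theorem stmt_11 (F : Type*) [Field F] [Fintype F] (q : ℕ) (hq : Fintype.card F = q)
    (n i : ℕ) (hn : 2 ≤ n) (hi1 : 1 ≤ i) (hin : i ≤ n - 1)
    (l : Fin n → ℕ)
    (hdesc : ∀ j j' : Fin n, i ≤ (j : ℕ) + 1 → j ≤ j' → l j' ≤ l j)
    (hpos : ∀ j : Fin n, i ≤ (j : ℕ) + 1 → 1 ≤ l j) :
    ((Qset F n l i).ncard : ℤ)
      = q ^ (n - i) *
        (((Pset F n (Function.update l ⟨i - 1, by omega⟩ (l ⟨i - 1, by omega⟩ - 1))).ncard : ℤ)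
          - ((Rset F n (Function.update l ⟨i - 1, by omega⟩ (l ⟨i - 1, by omega⟩ - 1))
                (i + 1)).ncard : ℤ)) := by
  classical
  have hn1 : i - 1 < n := by omega
  set i0 : Fin n := ⟨i - 1, hn1⟩ with hi0
  have hi0v : (i0 : ℕ) = i - 1 := rfl
  set l' : Fin n → ℕ := Function.update l i0 (l i0 - 1) with hl'
  have hld : ∀ k : Fin n, i0 < k → l k ≤ l i0 := by
    intro k hk
    exact hdesc i0 k (by rw [hi0v]; omega) (le_of_lt hk)
  have hl1 : 1 ≤ l i0 := hpos i0 (by rw [hi0v]; omega)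
  -- index subtype equivalences
  have hLI1 : ∀ v : Fin n → (Fin n → F),
      LinearIndependent F (fun j : {j : Fin n // i ≤ (j : ℕ) + 1} => v j)
        ↔ LinearIndependent F (fun j : {j : Fin n // i0 ≤ j} => v j) := by
    intro v
    apply li_subtype_iff v _ _ (fun j => ?_)
    rw [Fin.le_def, hi0v]
    omega
  have hLI2 : ∀ v : Fin n → (Fin n → F),
      LinearIndependent F (fun j : {j : Fin n // i + 1 ≤ (j : ℕ) + 1} => v j)
        ↔ LinearIndependent F (fun j : {j : Fin n // i0 < j} => v j) := by
    intro v
    apply li_subtype_iff v _ _ (fun j => ?_)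
    rw [Fin.lt_def, hi0v]
    omega
  have hQiff : ∀ A : GL (Fin n) F[X], A ∈ Qset F n l i ↔
      A ∈ Pset F n l ∧
      (¬ LinearIndependent F (fun j : {j : Fin n // i0 ≤ j} => colVec F n l A j)) ∧
      LinearIndependent F (fun j : {j : Fin n // i0 < j} => colVec F n l A j) := by
    intro A
    show A ∈ Pset F n l ∧ _ ↔ _
    rw [hLI1, hLI2]
  have hRiff : ∀ B : GL (Fin n) F[X], B ∈ Rset F n l' (i + 1) ↔
      B ∈ Pset F n l' ∧
      ¬ LinearIndependent F (fun j : {j : Fin n // i0 < j} => colVec F n l' B j) := by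
    intro B
    show B ∈ Pset F n l' ∧ _ ↔ _
    rw [hLI2]
  set V : Set (Fin n → F) := {c | ∀ j, ¬ i0 < j → c j = 0} with hV
  set T : Set (GL (Fin n) F[X]) := Pset F n l' \ Rset F n l' (i + 1) with hT
  have hTiff : ∀ B : GL (Fin n) F[X], B ∈ T ↔
      B ∈ Pset F n l' ∧
      LinearIndependent F (fun j : {j : Fin n // i0 < j} => colVec F n l' B j) := by
    intro B
    rw [hT, Set.mem_diff, hRiff]
    constructor
    · rintro ⟨hP, hnR⟩
      refine ⟨hP, ?_⟩
      by_contra hno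
      exact hnR ⟨hP, hno⟩
    · rintro ⟨hP, hLI⟩
      exact ⟨hP, fun h => h.2 hLI⟩
  set f : (Fin n → F) × GL (Fin n) F[X] → GL (Fin n) F[X] :=
    fun p => psi i0 l p.1 p.2 with hfdef
  -- forward membership: f maps V ×ˢ T into Qset, with the defining relation
  have hfwd : ∀ c ∈ V, ∀ B ∈ T, psi i0 l c B ∈ Qset F n l i ∧
      colVec F n l (psi i0 l c B) i0 = ∑ k, c k • colVec F n l (psi i0 l c B) k ∧
      LinearIndependent F (fun j : {j : Fin n // i0 < j} => colVec F n l (psi i0 l c B) j) := by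
    intro c hcV B hBT
    obtain ⟨hBP, hBLI⟩ := (hTiff B).mp hBT
    obtain ⟨hP, hb, hrel⟩ := forward_mem i0 l hld hl1 c hcV B hBP
    have htail : LinearIndependent F
        (fun j : {j : Fin n // i0 < j} => colVec F n l (psi i0 l c B) j) := by
      have heqf : (fun j : {j : Fin n // i0 < j} => colVec F n l (psi i0 l c B) j)
          = fun j : {j : Fin n // i0 < j} =>
              (M0 i0 l (-c)).mulVec (colVec F n l' B j) :=
        _root_.funext fun j => hb j (ne_of_gt j.2)
      rw [heqf]
      exact (li_mulVec (M0 i0 l (-c)) (M0 i0 l c) (M0_inv i0 l c)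
        (fun j : {j : Fin n // i0 < j} => colVec F n l' B j)).mpr hBLI
    refine ⟨(hQiff _).mpr ⟨hP, ?_, htail⟩, hrel, htail⟩
    exact not_li_of_rel (colVec F n l (psi i0 l c B)) i0 c hcV hrel
  -- image equality
  have himg : Qset F n l i = f '' (V ×ˢ T) := by
    ext A
    constructor
    · intro hA
      obtain ⟨hP, hdep, hind⟩ := (hQiff A).mp hA
      obtain ⟨c, hcs, hrel⟩ := exists_c (colVec F n l A) i0 hdep hind
      obtain ⟨hBP, hb⟩ := backward_mem i0 l hld hl1 c hcs A hP hrel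
      refine ⟨⟨c, psi i0 l (-c) A⟩, ⟨hcs, ?_⟩, ?_⟩
      · -- psi i0 l (-c) A ∈ T
        rw [hTiff]
        refine ⟨hBP, ?_⟩
        have heqf : (fun j : {j : Fin n // i0 < j} => colVec F n l' (psi i0 l (-c) A) j)
            = fun j : {j : Fin n // i0 < j} => (M0 i0 l c).mulVec (colVec F n l A j) :=
          _root_.funext fun j => hb j (ne_of_gt j.2)
        rw [heqf]
        have hMinv : M0 i0 l (-c) * M0 i0 l c = 1 := by
          have h5 := M0_inv i0 l (-c)
          rwa [neg_neg] at h5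
        exact (li_mulVec (M0 i0 l c) (M0 i0 l (-c)) hMinv
          (fun j : {j : Fin n // i0 < j} => colVec F n l A j)).mpr hind
      · show psi i0 l c (psi i0 l (-c) A) = A
        rw [psi_psi, neg_add_cancel, psi_zero]
    · rintro ⟨⟨c, B⟩, ⟨hcV, hBT⟩, rfl⟩
      exact (hfwd c hcV B hBT).1
  -- injectivity
  have hinj : Set.InjOn f (V ×ˢ T) := by
    rintro ⟨c1, B1⟩ h1 ⟨c2, B2⟩ h2 heq
    rw [Set.mem_prod] at h1 h2
    obtain ⟨hc1, hB1⟩ := h1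
    obtain ⟨hc2, hB2⟩ := h2
    obtain ⟨-, hrel1, htail1⟩ := hfwd c1 hc1 B1 hB1
    obtain ⟨-, hrel2, -⟩ := hfwd c2 hc2 B2 hB2
    have heq' : psi i0 l c1 B1 = psi i0 l c2 B2 := heq
    have hceq : c1 = c2 := by
      apply unique_c (colVec F n l (psi i0 l c1 B1)) i0 htail1 c1 c2 hc1 hc2
      calc ∑ j, c1 j • colVec F n l (psi i0 l c1 B1) j
          = colVec F n l (psi i0 l c1 B1) i0 := hrel1.symm
        _ = colVec F n l (psi i0 l c2 B2) i0 := by rw [heq']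
        _ = ∑ j, c2 j • colVec F n l (psi i0 l c2 B2) j := hrel2
        _ = ∑ j, c2 j • colVec F n l (psi i0 l c1 B1) j := by rw [heq']
    have hBeq : B1 = B2 := by
      calc B1 = psi i0 l (-c1) (psi i0 l c1 B1) := (psi_neg_psi i0 l c1 B1).symm
        _ = psi i0 l (-c2) (psi i0 l c2 B2) := by rw [heq', hceq]
        _ = B2 := psi_neg_psi i0 l c2 B2
    rw [Prod.ext_iff]
    exact ⟨hceq, hBeq⟩
  -- cardinalities
  have hfinP : (Pset F n l').Finite := Pset_finite l'
  have hsub : Rset F n l' (i + 1) ⊆ Pset F n l' := fun B hB => hB.1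
  have hQcard : (Qset F n l i).ncard = q ^ (n - i) * (Pset F n l' \ Rset F n l' (i + 1)).ncard := by
    rw [himg, Set.ncard_image_of_injOn hinj]
    rw [← Nat.card_coe_set_eq, Nat.card_congr (Equiv.Set.prod V T), Nat.card_prod,
      show Nat.card ↥V = q ^ (n - 1 - (i0 : ℕ)) from card_V i0 q hq,
      Nat.card_coe_set_eq, hT]
    congr 2
    rw [hi0v]
    omega
  have hfinR : (Rset F n l' (i + 1)).Finite := hfinP.subset hsub
  rw [hQcard]
  rw [Set.ncard_diff hsub hfinR]
  push_cast [Nat.cast_sub (Set.ncard_le_ncard hsub hfinP)]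
  ring
end

section
/- Let F be a finite field, let 2 ≤ l ≤ n, and let M = (m_{i,j}) be an n×n upper-triangular matrix over F[x] with det(M) ≠ 0 whose top-left (l−1)×(l−1) block is the diagonal matrix diag(d_1, …, d_{l-1}). Define M' = (m'_{i,j}) by m'_{i,l} = m_{i,l} − T_{deg(d_i)}(m_{i,l}) for 1 ≤ i ≤ l−1, and m'_{i,j} = m_{i,j} for all other entries. Then for every natural number k, the set {g ∈ GL_n(F[x]) : gM satisfies P(k)} equals the set {g ∈ GL_n(F[x]) : gM' satisfies P(k)}. -/
open Polynomial Matrix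

/-!
Write `M' = M - N`, where `N` is supported on column `l` in the rows `i < l`, with
`N_{i,l} = T_{deg d_i}(m_{i,l})` of degree at most `deg d_i`. Since column `i < l` of `M` is
`d_i e_i` and is shared by `M'`, the `i`-th column of `gM` and of `gM'` is `g_{·,i} d_i`, so
if either `gM` or `gM'` satisfies `P(k)` then every `g_{r,i} d_i` has degree at most `k`. Hence
`(gN)_{r,l} = Σ_{i<l} g_{r,i} N_{i,l}` has degree at most `k` as well, and `gM = gM' + gN`
transfers `P(k)` in both directions.
-/

/-- The truncation `T_u(f) = Σ_{0 ≤ i ≤ u} a_i x^i` of a polynomial `f = Σ_i a_i x^i`. -/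
noncomputable def truncPoly {R : Type*} [CommRing R] (u : ℕ) (f : R[X]) : R[X] :=
  ∑ i ∈ Finset.range (u + 1), Polynomial.C (f.coeff i) * Polynomial.X ^ i

theorem truncPoly_degree_le {R : Type*} [CommRing R] (u : ℕ) (f : R[X]) :
    (truncPoly u f).degree ≤ u := by
  refine (degree_sum_le _ _).trans (Finset.sup_le fun i hi => ?_)
  exact (degree_C_mul_X_pow_le _ _).trans
    (by exact_mod_cast Nat.le_of_lt_succ (Finset.mem_range.mp hi))

theorem Matrix.mul_apply_of_eq_zero_of_ne {α ι : Type*} [Fintype ι] [NonUnitalNonAssocSemiring α]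
    (A M : Matrix ι ι α) {j : ι} (hM : ∀ t, t ≠ j → M t j = 0) (r : ι) :
    (A * M) r j = A r j * M j j := by
  rw [mul_apply]
  exact Finset.sum_eq_single j (fun t _ ht => by rw [hM t ht, mul_zero])
    (fun h => absurd (Finset.mem_univ j) h)

section DegreeTransfer

variable {R ι : Type*} [Ring R] [NoZeroDivisors R] [Fintype ι]
  (A M M' : Matrix ι ι R[X]) (p : ι → Prop) (k : ℕ)

theorem degree_mul_apply_sub_mul_apply_le
    (hcol : ∀ i, p i → ∀ t, t ≠ i → M t i = 0)
    (hrow : ∀ i j, ¬ p i → M' i j = M i j)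
    (hdeg : ∀ i j, p i → (M i j - M' i j).degree ≤ (M i i).degree)
    (hA : ∀ r i, p i → ((A * M) r i).degree ≤ k) (r j : ι) :
    ((A * M) r j - (A * M') r j).degree ≤ k := by
  have hsum : (A * M) r j - (A * M') r j = ∑ i, A r i * (M i j - M' i j) := by
    simp only [mul_apply, ← Finset.sum_sub_distrib, mul_sub]
  rw [hsum]
  refine (degree_sum_le _ _).trans (Finset.sup_le fun i _ => ?_)
  by_cases hi : p i
  · calc (A r i * (M i j - M' i j)).degree
        ≤ (A r i * M i i).degree := by
          rw [degree_mul, degree_mul]; exact add_le_add_right (hdeg i j hi) _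
      _ = ((A * M) r i).degree := by rw [mul_apply_of_eq_zero_of_ne A M (hcol i hi)]
      _ ≤ k := hA r i hi
  · simp [hrow i j hi]

theorem forall_degree_mul_apply_le_iff
    (hcol : ∀ i, p i → ∀ t, t ≠ i → M t i = 0)
    (hcol' : ∀ i, p i → ∀ t, M' t i = M t i)
    (hrow : ∀ i j, ¬ p i → M' i j = M i j)
    (hdeg : ∀ i j, p i → (M i j - M' i j).degree ≤ (M i i).degree) :
    (∀ r j, ((A * M) r j).degree ≤ k) ↔ (∀ r j, ((A * M') r j).degree ≤ k) := by
  have hsame : ∀ r i, p i → (A * M') r i = (A * M) r i := fun r i hi => by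
    simp only [mul_apply, hcol' i hi]
  have hdiff := degree_mul_apply_sub_mul_apply_le A M M' p k hcol hrow hdeg
  constructor
  · intro h r j
    have hA := hdiff (fun r i _ => h r i) r j
    rw [← sub_sub_cancel ((A * M) r j) ((A * M') r j)]
    exact (degree_sub_le _ _).trans (max_le (h r j) hA)
  · intro h r j
    have hA := hdiff (fun r i hi => hsame r i hi ▸ h r i) r j
    rw [← add_sub_cancel ((A * M') r j) ((A * M) r j)]
    exact (degree_add_le _ _).trans (max_le (h r j) hA)

end DegreeTransfer

theorem stmt_13_general (F : Type*) [Field F]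
    (n l : ℕ)
    (M : Matrix (Fin n) (Fin n) F[X])
    (htri : ∀ i j : Fin n, (j : ℕ) < (i : ℕ) → M i j = 0)
    (hdet : M.det ≠ 0)
    (hdiag : ∀ i j : Fin n, (i : ℕ) < l - 1 → (j : ℕ) < l - 1 → i ≠ j → M i j = 0)
    (M' : Matrix (Fin n) (Fin n) F[X])
    (hM' : ∀ i j : Fin n, M' i j =
      if (j : ℕ) = l - 1 ∧ (i : ℕ) < l - 1 then
        M i j - truncPoly ((M i i).natDegree) (M i j)
      else M i j) :
    ∀ k : ℕ,
      {g : GL (Fin n) F[X] |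
          ∀ i j, (((g : Matrix (Fin n) (Fin n) F[X]) * M) i j).degree ≤ (k : ℕ)} =
      {g : GL (Fin n) F[X] |
          ∀ i j, (((g : Matrix (Fin n) (Fin n) F[X]) * M') i j).degree ≤ (k : ℕ)} := by
  intro k
  have hdiag_ne : ∀ i, M i i ≠ 0 := by
    rw [det_of_isUpperTriangular (fun i j hij => htri i j hij), Finset.prod_ne_zero_iff] at hdet
    exact fun i => hdet i (Finset.mem_univ i)
  have hcol : ∀ i : Fin n, (i : ℕ) < l - 1 → ∀ t, t ≠ i → M t i = 0 := fun i hi t hti => by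
    rcases lt_or_gt_of_ne (Fin.val_ne_of_ne hti) with h | h
    exacts [hdiag t i (h.trans hi) hi hti, htri t i h]
  have hcol' : ∀ i : Fin n, (i : ℕ) < l - 1 → ∀ t, M' t i = M t i := fun i hi t => by
    simp [hM', hi.ne]
  have hrow : ∀ i j : Fin n, ¬ (i : ℕ) < l - 1 → M' i j = M i j := fun i j hi => by
    simp [hM', hi]
  have hdeg : ∀ i j : Fin n, (i : ℕ) < l - 1 → (M i j - M' i j).degree ≤ (M i i).degree :=
    fun i j _ => by
      rw [hM', degree_eq_natDegree (hdiag_ne i)]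
      split_ifs
      · simpa using truncPoly_degree_le _ (M i j)
      · simp
  ext g
  exact forall_degree_mul_apply_le_iff _ M M' _ k hcol hcol' hrow hdeg

/-- Let `M` be an upper-triangular `n × n` matrix over `F[x]` with
`det M ≠ 0` whose top-left `(l-1) × (l-1)` block is diagonal with diagonal entries `d_i`.
Replacing the entries `m_{i,l}` (`1 ≤ i ≤ l-1`) by `m_{i,l} - T_{deg d_i}(m_{i,l})` does not
change the set of `g ∈ GL_n(F[x])` such that `gM` satisfies `P(k)`, for any `k`. -/
theorem stmt_13 (F : Type*) [Field F] [Fintype F]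
    (n l : ℕ) (hl2 : 2 ≤ l) (hln : l ≤ n)
    (M : Matrix (Fin n) (Fin n) F[X])
    (htri : ∀ i j : Fin n, (j : ℕ) < (i : ℕ) → M i j = 0)
    (hdet : M.det ≠ 0)
    (hdiag : ∀ i j : Fin n, (i : ℕ) < l - 1 → (j : ℕ) < l - 1 → i ≠ j → M i j = 0)
    (M' : Matrix (Fin n) (Fin n) F[X])
    (hM' : ∀ i j : Fin n, M' i j =
      if (j : ℕ) = l - 1 ∧ (i : ℕ) < l - 1 then
        M i j - truncPoly ((M i i).natDegree) (M i j)
      else M i j) :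
    ∀ k : ℕ,
      {g : GL (Fin n) F[X] |
          ∀ i j, (((g : Matrix (Fin n) (Fin n) F[X]) * M) i j).degree ≤ (k : ℕ)} =
      {g : GL (Fin n) F[X] |
          ∀ i j, (((g : Matrix (Fin n) (Fin n) F[X]) * M') i j).degree ≤ (k : ℕ)} :=
  stmt_13_general F n l M htri hdet hdiag M' hM'
end
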